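/- Let H be a horizontal path with m East steps and m West steps, and let V be a vertical path with n North steps and n South steps. For every integer k with k ≥ 1, the number of shuffles of V and H whose signed peak-count has absolute value k equals 2 · C(m+n, n−k) · C(m+n, n+k), and the number of shuffles with signed peak-count 0 equals C(m+n, n)², where C(a,b) denotes the binomial coefficient, taken to be 0 unless 0 ≤ b ≤ a. -/

import Mathlib

inductive Step : Type
  | E | W | N | S
deriving DecidableEq, Repr

open Step

/-- A step is vertical (North or South). -/
def isVert : Step → Bool
  | N => true
  | S => true
  | _ => false

/-- A step is horizontal (East or West). -/
def isHoriz : Step → Bool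
  | E => true
  | W => true
  | _ => false

/-- `σ` is a shuffle (interleaving) of the vertical path `V` and horizontal path `H`:
its subsequence of vertical steps is `V` and its subsequence of horizontal steps is `H`. -/
def IsShuffle (V H σ : List Step) : Prop :=
  σ.filter isVert = V ∧ σ.filter isHoriz = H

/-- The list of adjacent pairs `(σ_i, σ_{i+1})` of a list. -/
def pairs (σ : List Step) : List (Step × Step) := σ.zip σ.tail

/-- Signed peak-count: (# of (N,W) adjacent pairs) − (# of (E,S) adjacent pairs). -/
def signedPeak (σ : List Step) : ℤ :=
  (((pairs σ).filter (fun p => decide (p.1 = N ∧ p.2 = W))).length : ℤ)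
  - (((pairs σ).filter (fun p => decide (p.1 = E ∧ p.2 = S))).length : ℤ)

/-- Peak-count: (# of (N,W) adjacent pairs) + (# of (E,S) adjacent pairs). -/
def peakCount (σ : List Step) : ℕ :=
  ((pairs σ).filter (fun p => decide (p.1 = N ∧ p.2 = W))).length
  + ((pairs σ).filter (fun p => decide (p.1 = E ∧ p.2 = S))).length

/-- Binomial coefficient with integer arguments, equal to 0 unless `0 ≤ b ≤ a`. -/
def zch (a b : ℤ) : ℕ := if 0 ≤ b ∧ b ≤ a then a.toNat.choose b.toNat else 0

/-!
Counting more generally, with `#X` the number of steps `X` in `V` and `H`, the number `c V H k`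
of shuffles with signed peak-count `k` is `C(#N + #E, #E + k) · C(#S + #W, #S + k)`; the
statement is the case `#N = #S = n`, `#E = #W = m`, using `C(a, b) = C(a, a - b)`.

A shuffle of `v :: V` and `h :: H` starts with `v` or with `h`, and prepending a step changes the
signed peak-count only at a corner `N W` or `E S`. Correcting for the shuffles that start with
such a corner gives
`c (v :: V) (h :: H) k + c V H k = c V (h :: H) k + c (v :: V) H k + c V H (k - w)`,
with `w` the weight of the corner that `v` and `h` can form. By Pascal's rule the binomial
product obeys the same recursion, and the two agree when one of the paths is empty.
-/

open Finset

lemma card_filter_add_ite_eq {β : Type*} (A : Finset β) (p : β → Prop) [DecidablePred p]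
    (f : β → ℤ) (c k : ℤ) :
    #{b ∈ A | f b + (if p b then c else 0) = k} + #{b ∈ A | p b ∧ f b = k}
      = #{b ∈ A | f b = k} + #{b ∈ A | p b ∧ f b = k - c} := by
  simp only [card_filter, ← sum_add_distrib]
  refine sum_congr rfl fun b _ => ?_
  by_cases hp : p b <;> simp only [hp, if_true, if_false, true_and, false_and] <;>
    split_ifs <;> omega

lemma card_filter_natAbs_eq {β : Type*} [DecidableEq β] (A : Finset β) (f : β → ℤ) {k : ℕ}
    (hk : k ≠ 0) :
    #{b ∈ A | (f b).natAbs = k} = #{b ∈ A | f b = k} + #{b ∈ A | f b = -k} := by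
  rw [← card_union_of_disjoint (disjoint_filter.2 fun b _ h₁ h₂ => hk (by omega)),
    ← filter_or]
  simp only [Int.natAbs_eq_iff]

section Shuffles

variable {α : Type*} [DecidableEq α]

def shuffles : List α → List α → Finset (List α)
  | [], H => {H}
  | v :: V, [] => {v :: V}
  | v :: V, h :: H =>
    (shuffles V (h :: H)).image (v :: ·) ∪ (shuffles (v :: V) H).image (h :: ·)

@[simp]
lemma shuffles_nil_left (H : List α) : shuffles [] H = {H} := by
  rw [shuffles]

@[simp]
lemma shuffles_nil_right (V : List α) : shuffles V [] = {V} := by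
  cases V <;> rw [shuffles]

lemma shuffles_cons_cons (v h : α) (V H : List α) :
    shuffles (v :: V) (h :: H)
      = (shuffles V (h :: H)).image (v :: ·) ∪ (shuffles (v :: V) H).image (h :: ·) := by
  rw [shuffles]

lemma nil_mem_shuffles_iff {V H : List α} : [] ∈ shuffles V H ↔ V = [] ∧ H = [] := by
  cases V <;> cases H <;> simp [shuffles_cons_cons]

lemma cons_mem_shuffles_iff {x : α} {σ V H : List α} :
    x :: σ ∈ shuffles V H ↔
      (∃ V', V = x :: V' ∧ σ ∈ shuffles V' H) ∨
        (∃ H', H = x :: H' ∧ σ ∈ shuffles V H') := by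
  cases V <;> cases H <;> simp [shuffles_cons_cons, eq_comm, and_comm]

lemma head?_of_mem_shuffles {σ V H : List α} (hσ : σ ∈ shuffles V H) :
    σ.head? = V.head? ∨ σ.head? = H.head? := by
  cases σ with
  | nil => simp [nil_mem_shuffles_iff.1 hσ]
  | cons x σ =>
    rcases cons_mem_shuffles_iff.1 hσ with ⟨V', rfl, -⟩ | ⟨H', rfl, -⟩ <;> simp

lemma head?_ne_of_mem_shuffles_cons_left {x v : α} {V H σ : List α} (hxH : x ∉ H)
    (hxv : x ≠ v) (hσ : σ ∈ shuffles (v :: V) H) : σ.head? ≠ some x := by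
  intro hx
  rcases head?_of_mem_shuffles hσ with e | e <;> rw [hx] at e
  · exact hxv (Option.some_inj.1 e)
  · exact hxH (List.mem_of_mem_head? e.symm)

lemma head?_ne_of_mem_shuffles_cons_right {x h : α} {V H σ : List α} (hxV : x ∉ V)
    (hxh : x ≠ h) (hσ : σ ∈ shuffles V (h :: H)) : σ.head? ≠ some x := by
  intro hx
  rcases head?_of_mem_shuffles hσ with e | e <;> rw [hx] at e
  · exact hxV (List.mem_of_mem_head? e.symm)
  · exact hxh (Option.some_inj.1 e)

lemma card_filter_shuffles_cons_cons {v h : α} (hvh : v ≠ h) (V H : List α)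
    (P : List α → Prop) [DecidablePred P] :
    #{σ ∈ shuffles (v :: V) (h :: H) | P σ}
      = #{σ ∈ shuffles V (h :: H) | P (v :: σ)}
        + #{σ ∈ shuffles (v :: V) H | P (h :: σ)} := by
  rw [shuffles_cons_cons, filter_union, card_union_of_disjoint, filter_image, filter_image,
    card_image_of_injective _ List.cons_injective, card_image_of_injective _ List.cons_injective]
  refine disjoint_filter_filter (disjoint_left.2 ?_)
  simp only [mem_image]
  rintro _ ⟨σ, -, rfl⟩ ⟨τ, -, h⟩
  exact hvh (List.cons.inj h).1.symm

lemma card_filter_head?_shuffles_cons_left {v : α} {H : List α} (hv : v ∉ H) (V : List α)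
    (P : List α → Prop) [DecidablePred P] :
    #{σ ∈ shuffles (v :: V) H | σ.head? = some v ∧ P σ}
      = #{σ ∈ shuffles V H | P (v :: σ)} := by
  rcases H with _ | ⟨h, H⟩
  · simp only [shuffles_nil_right, filter_singleton, List.head?_cons, true_and]
    split_ifs <;> rfl
  · have hvh : v ≠ h := fun e => hv (by simp [e])
    rw [card_filter_shuffles_cons_cons hvh]
    simp [hvh.symm]

lemma card_filter_head?_shuffles_cons_right {h : α} {V : List α} (hh : h ∉ V) (H : List α)
    (P : List α → Prop) [DecidablePred P] :
    #{σ ∈ shuffles V (h :: H) | σ.head? = some h ∧ P σ}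
      = #{σ ∈ shuffles V H | P (h :: σ)} := by
  rcases V with _ | ⟨v, V⟩
  · simp only [shuffles_nil_left, filter_singleton, List.head?_cons, true_and]
    split_ifs <;> rfl
  · have hvh : v ≠ h := fun e => hh (by simp [e])
    rw [card_filter_shuffles_cons_cons hvh]
    simp [hvh]

end Shuffles

lemma isHoriz_eq_not_isVert (s : Step) : isHoriz s = !isVert s := by
  cases s <;> rfl

lemma isShuffle_cons_iff {x : Step} {V H σ : List Step} :
    IsShuffle V H (x :: σ) ↔
      if isVert x then ∃ V', V = x :: V' ∧ IsShuffle V' H σ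
      else ∃ H', H = x :: H' ∧ IsShuffle V H' σ := by
  cases hx : isVert x <;> simp [IsShuffle, isHoriz_eq_not_isVert, hx, eq_comm, and_comm]

lemma mem_shuffles_iff_isShuffle {V H σ : List Step} (hV : ∀ s ∈ V, isVert s = true)
    (hH : ∀ s ∈ H, isHoriz s = true) : σ ∈ shuffles V H ↔ IsShuffle V H σ := by
  induction σ generalizing V H with
  | nil => simp [nil_mem_shuffles_iff, IsShuffle, eq_comm]
  | cons x σ ih =>
    rw [cons_mem_shuffles_iff, isShuffle_cons_iff]
    cases hx : isVert x
    · have hxV : ∀ V', V ≠ x :: V' := fun V' hV' => by simpa [hx] using hV x (by simp [hV'])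
      simp only [hxV, false_and, exists_false, false_or, Bool.false_eq_true, if_false]
      refine exists_congr fun H' => and_congr_right fun hH' => ih hV ?_
      exact fun s hs => hH s (by simp [hH', hs])
    · have hxH : ∀ H', H ≠ x :: H' := fun H' hH' => by
        simpa [isHoriz_eq_not_isVert, hx] using hH x (by simp [hH'])
      simp only [hxH, false_and, exists_false, or_false, if_true]
      refine exists_congr fun V' => and_congr_right fun hV' => ih ?_ hH
      exact fun s hs => hV s (by simp [hV', hs])

lemma setOf_isShuffle_and_eq_coe_filter {V H : List Step} (hV : ∀ s ∈ V, isVert s = true)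
    (hH : ∀ s ∈ H, isHoriz s = true) (P : List Step → Prop) [DecidablePred P] :
    {σ | IsShuffle V H σ ∧ P σ} = ↑{σ ∈ shuffles V H | P σ} := by
  ext σ
  simp [mem_shuffles_iff_isShuffle hV hH]

lemma signedPeak_cons_cons (x y : Step) (l : List Step) :
    signedPeak (x :: y :: l) = signedPeak (y :: l)
      + (if x = N ∧ y = W then 1 else 0) - (if x = E ∧ y = S then 1 else 0) := by
  cases x <;> cases y <;> simp [signedPeak, pairs] <;> omega

lemma signedPeak_N_cons (l : List Step) :
    signedPeak (N :: l) = signedPeak l + if l.head? = some W then 1 else 0 := by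
  rcases l with _ | ⟨y, l⟩
  · rfl
  · cases y <;> simp [signedPeak_cons_cons]

lemma signedPeak_E_cons (l : List Step) :
    signedPeak (E :: l) = signedPeak l + if l.head? = some S then -1 else 0 := by
  rcases l with _ | ⟨y, l⟩
  · rfl
  · cases y <;> simp [signedPeak_cons_cons, sub_eq_add_neg]

lemma signedPeak_S_cons (l : List Step) : signedPeak (S :: l) = signedPeak l := by
  rcases l with _ | ⟨y, l⟩
  · rfl
  · simp [signedPeak_cons_cons]

lemma signedPeak_W_cons (l : List Step) : signedPeak (W :: l) = signedPeak l := by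
  rcases l with _ | ⟨y, l⟩
  · rfl
  · simp [signedPeak_cons_cons]

lemma signedPeak_eq_zero_of_forall_isVert {l : List Step} (hl : ∀ s ∈ l, isVert s = true) :
    signedPeak l = 0 := by
  induction l with
  | nil => rfl
  | cons x l ih =>
    have hW : l.head? ≠ some W := fun h => by
      simpa [isVert] using hl W (.tail _ (List.mem_of_mem_head? h))
    rcases x with _ | _ | _ | _ <;> simp_all [signedPeak_N_cons, signedPeak_S_cons, isVert]

lemma signedPeak_eq_zero_of_forall_isHoriz {l : List Step} (hl : ∀ s ∈ l, isHoriz s = true) :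
    signedPeak l = 0 := by
  induction l with
  | nil => rfl
  | cons x l ih =>
    have hS : l.head? ≠ some S := fun h => by
      simpa [isHoriz] using hl S (.tail _ (List.mem_of_mem_head? h))
    rcases x with _ | _ | _ | _ <;> simp_all [signedPeak_E_cons, signedPeak_W_cons, isHoriz]

def countShuffles (V H : List Step) (k : ℤ) : ℕ := #{σ ∈ shuffles V H | signedPeak σ = k}

/-- The weight of the only corner a vertical step `v` and a horizontal step `h` can form:
`N W` (in that order) is a peak, `E S` (in that order) a valley. -/
def cornerWeight : Step → Step → ℤ
  | N, W => 1
  | S, E => -1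
  | _, _ => 0

lemma countShuffles_cons_cons {v h : Step} {V H : List Step} (hv : isVert v = true)
    (hh : isHoriz h = true) (hV : ∀ s ∈ V, isVert s = true) (hH : ∀ s ∈ H, isHoriz s = true)
    (k : ℤ) :
    countShuffles (v :: V) (h :: H) k + countShuffles V H k
      = countShuffles V (h :: H) k + countShuffles (v :: V) H k
        + countShuffles V H (k - cornerWeight v h) := by
  have hvH : v ∉ H := fun hm => by simpa [isHoriz_eq_not_isVert, hv] using hH v hm
  have hhV : h ∉ V := fun hm => by simp [isHoriz_eq_not_isVert, hV h hm] at hh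
  have hWV : W ∉ V := fun hm => by simpa [isVert] using hV W hm
  have hSH : S ∉ H := fun hm => by simpa [isHoriz] using hH S hm
  unfold countShuffles
  rw [card_filter_shuffles_cons_cons (by rintro rfl; simp [isHoriz_eq_not_isVert, hv] at hh)]
  rcases v with _ | _ | _ | _ <;> rcases h with _ | _ | _ | _ <;>
    simp only [isVert, isHoriz, Bool.false_eq_true] at hv hh <;>
    simp only [signedPeak_N_cons, signedPeak_S_cons, signedPeak_E_cons, signedPeak_W_cons]
  case N.E =>
    rw [show cornerWeight N E = 0 from rfl, sub_zero,
      filter_congr (s := shuffles V (E :: H)) fun σ hσ => by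
        rw [if_neg (head?_ne_of_mem_shuffles_cons_right hWV (by decide) hσ), add_zero],
      filter_congr (s := shuffles (N :: V) H) fun σ hσ => by
        rw [if_neg (head?_ne_of_mem_shuffles_cons_left hSH (by decide) hσ), add_zero]]
  case N.W =>
    have key := card_filter_add_ite_eq (shuffles V (W :: H)) (·.head? = some W) signedPeak 1 k
    rw [card_filter_head?_shuffles_cons_right hhV, card_filter_head?_shuffles_cons_right hhV] at key
    simp only [signedPeak_W_cons] at key
    rw [show cornerWeight N W = 1 from rfl]
    omega
  case S.E =>
    have key := card_filter_add_ite_eq (shuffles (S :: V) H) (·.head? = some S) signedPeak (-1) k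
    rw [card_filter_head?_shuffles_cons_left hvH, card_filter_head?_shuffles_cons_left hvH] at key
    simp only [signedPeak_S_cons] at key
    rw [show cornerWeight S E = -1 from rfl]
    omega
  case S.W =>
    rw [show cornerWeight S W = 0 from rfl, sub_zero]

lemma zch_of_neg {a r : ℤ} (hr : r < 0) : zch a r = 0 := by
  simp [zch]
  omega

lemma zch_of_lt {a r : ℤ} (h : a < r) : zch a r = 0 := by
  simp [zch]
  omega

lemma zch_natCast (n r : ℕ) : zch n r = n.choose r := by
  unfold zch
  split_ifs with h
  · simp
  · exact (Nat.choose_eq_zero_of_lt (by omega)).symm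

lemma zch_symm (a r : ℤ) : zch a (a - r) = zch a r := by
  unfold zch
  split_ifs with h₁ h₂ h₂
  · rw [show (a - r).toNat = a.toNat - r.toNat by omega, Nat.choose_symm (by omega)]
  all_goals omega

lemma zch_add_one {a : ℤ} (ha : 0 ≤ a) (r : ℤ) : zch (a + 1) r = zch a r + zch a (r - 1) := by
  lift a to ℕ using ha
  rcases lt_or_ge r 0 with hr | hr
  · simp [zch_of_neg hr, zch_of_neg (show r - 1 < 0 by omega)]
  lift r to ℕ using hr
  rcases r with _ | r
  · rw [Nat.cast_zero, zero_sub, zch_of_neg (r := -1) (by decide)]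
    simp [zch]
    positivity
  · rw [show ((r + 1 : ℕ) : ℤ) - 1 = r by push_cast; ring, ← Nat.cast_succ, zch_natCast,
      zch_natCast, zch_natCast, Nat.choose_succ_succ', add_comm]

def binomAt (a c : ℕ) (k : ℤ) : ℕ := zch ((a + c : ℕ) : ℤ) (c + k)

lemma binomAt_succ_left (a c : ℕ) (k : ℤ) :
    binomAt (a + 1) c k = binomAt a c k + binomAt a c (k - 1) := by
  rw [binomAt, show a + 1 + c = (a + c) + 1 by ring, Nat.cast_succ, zch_add_one (by positivity)]
  rw [binomAt, binomAt, add_sub_assoc]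

lemma binomAt_succ_right (a c : ℕ) (k : ℤ) :
    binomAt a (c + 1) k = binomAt a c (k + 1) + binomAt a c k := by
  rw [binomAt, show a + (c + 1) = (a + c) + 1 by ring, Nat.cast_succ, zch_add_one (by positivity)]
  rw [binomAt, binomAt]
  push_cast
  ring_nf

def shuffleBinomial (V H : List Step) (k : ℤ) : ℕ :=
  binomAt (V.count N) (H.count E) k * binomAt (H.count W) (V.count S) k

lemma shuffleBinomial_nil_left (H : List Step) (k : ℤ) :
    shuffleBinomial [] H k = if k = 0 then 1 else 0 := by
  simp only [shuffleBinomial, binomAt, List.count_nil, zero_add, add_zero]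
  rcases lt_trichotomy k 0 with hk | rfl | hk
  · simp [zch_of_neg hk, hk.ne]
  · simp [zch]
  · simp [zch_of_lt (show (H.count E : ℤ) < H.count E + k by omega), hk.ne']

lemma shuffleBinomial_nil_right (V : List Step) (k : ℤ) :
    shuffleBinomial V [] k = if k = 0 then 1 else 0 := by
  simp only [shuffleBinomial, binomAt, List.count_nil, zero_add, add_zero]
  rcases lt_trichotomy k 0 with hk | rfl | hk
  · simp [zch_of_neg hk, hk.ne]
  · simp [zch]
  · simp [zch_of_lt (show (V.count S : ℤ) < V.count S + k by omega), hk.ne']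

lemma shuffleBinomial_cons_cons {v h : Step} (hv : isVert v = true) (hh : isHoriz h = true)
    (V H : List Step) (k : ℤ) :
    shuffleBinomial (v :: V) (h :: H) k + shuffleBinomial V H k
      = shuffleBinomial V (h :: H) k + shuffleBinomial (v :: V) H k
        + shuffleBinomial V H (k - cornerWeight v h) := by
  rcases v with _ | _ | _ | _ <;> rcases h with _ | _ | _ | _ <;>
    simp only [isVert, isHoriz, Bool.false_eq_true] at hv hh <;>
    simp only [shuffleBinomial, cornerWeight, List.count_cons, beq_iff_eq, reduceCtorEq,
      if_true, if_false, add_zero, sub_zero, sub_neg_eq_add, binomAt_succ_left,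
      binomAt_succ_right, sub_add_cancel] <;>
    ring

lemma countShuffles_nil_left {H : List Step} (hH : ∀ s ∈ H, isHoriz s = true) (k : ℤ) :
    countShuffles [] H k = if k = 0 then 1 else 0 := by
  simp only [countShuffles, shuffles_nil_left, filter_singleton,
    signedPeak_eq_zero_of_forall_isHoriz hH, eq_comm (a := (0 : ℤ))]
  split_ifs <;> rfl

lemma countShuffles_nil_right {V : List Step} (hV : ∀ s ∈ V, isVert s = true) (k : ℤ) :
    countShuffles V [] k = if k = 0 then 1 else 0 := by
  simp only [countShuffles, shuffles_nil_right, filter_singleton,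
    signedPeak_eq_zero_of_forall_isVert hV, eq_comm (a := (0 : ℤ))]
  split_ifs <;> rfl

theorem countShuffles_eq_shuffleBinomial {V H : List Step} (hV : ∀ s ∈ V, isVert s = true)
    (hH : ∀ s ∈ H, isHoriz s = true) (k : ℤ) :
    countShuffles V H k = shuffleBinomial V H k := by
  induction V generalizing H k with
  | nil => rw [countShuffles_nil_left hH, shuffleBinomial_nil_left]
  | cons v V ihV =>
    have hv := hV v List.mem_cons_self
    have hV' : ∀ s ∈ V, isVert s = true := fun s hs => hV s (List.mem_cons_of_mem v hs)
    induction H generalizing k with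
    | nil => rw [countShuffles_nil_right hV, shuffleBinomial_nil_right]
    | cons h H ihH =>
      have hh := hH h List.mem_cons_self
      have hH' : ∀ s ∈ H, isHoriz s = true := fun s hs => hH s (List.mem_cons_of_mem h hs)
      have hcount := countShuffles_cons_cons hv hh hV' hH' k
      have hbinom := shuffleBinomial_cons_cons hv hh V H k
      rw [ihV hV' hH, ihV hV' hH', ihV hV' hH', ihH hH'] at hcount
      omega

/-- **Corollary (absolute signed peak-count enumeration for loops).**
If `H` is a horizontal loop with `m` East and `m` West steps and `V` is a vertical loop
with `n` North and `n` South steps, then for `k ≥ 1` the number of shuffles of `V` and `H`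
whose signed peak-count has absolute value `k` is `2·C(m+n, n−k)·C(m+n, n+k)`, and the
number with signed peak-count `0` is `C(m+n, n)²`. -/
theorem abs_signedPeak_enumeration_loops (m n : ℕ) (V H : List Step)
    (hV : ∀ s ∈ V, isVert s = true)
    (hVu : V.count Step.N = n) (hVd : V.count Step.S = n)
    (hH : ∀ s ∈ H, isHoriz s = true)
    (hHr : H.count Step.E = m) (hHl : H.count Step.W = m)
    (k : ℕ) (hk : 1 ≤ k) :
    {σ : List Step | IsShuffle V H σ ∧ (signedPeak σ).natAbs = k}.ncard
      = 2 * (zch ((m : ℤ) + n) ((n : ℤ) - k) * zch ((m : ℤ) + n) ((n : ℤ) + k))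
    ∧ {σ : List Step | IsShuffle V H σ ∧ signedPeak σ = 0}.ncard
      = ((m + n).choose n) ^ 2 := by
  have hcount (x : ℤ) :
      countShuffles V H x = zch ((m : ℤ) + n) (n - x) * zch ((m : ℤ) + n) (n + x) := by
    rw [countShuffles_eq_shuffleBinomial hV hH, shuffleBinomial, binomAt, binomAt,
      hVu, hVd, hHr, hHl, ← zch_symm _ ((m : ℤ) + x)]
    push_cast
    ring_nf
  rw [setOf_isShuffle_and_eq_coe_filter hV hH, setOf_isShuffle_and_eq_coe_filter hV hH,
    Set.ncard_coe_finset, Set.ncard_coe_finset, card_filter_natAbs_eq _ _ (by omega)]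
  change countShuffles V H k + countShuffles V H (-k) = _ ∧ countShuffles V H 0 = _
  rw [hcount, hcount, hcount, sub_neg_eq_add, ← sub_eq_add_neg, sub_zero, add_zero,
    ← Nat.cast_add, zch_natCast]
  constructor <;> ring
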